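/- Let d ≥ 2 and let V = Σ_{i,j=0}^{d−1}|ij⟩⟨ji| be the swap operator on ℂ^{d}⊗ℂ^{d}. Let γ^V be the density matrix on ℂ²⊗ℂ²⊗ℂ^{d}⊗ℂ^{d} (factors A,B,A',B') given by γ^V = (1/2)(|00⟩⟨00|⊗I/d² + |00⟩⟨11|⊗V/d² + |11⟩⟨00|⊗V/d² + |11⟩⟨11|⊗I/d²). Then, with Γ denoting the partial transpose over the factors B and B', one has ‖(γ^V)^{Γ}‖₁ = 1 + 1/d; equivalently the log-negativity of γ^V equals log₂(1 + 1/d). -/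

import Mathlib

open Matrix Kronecker BigOperators
open scoped ComplexOrder Classical

/-- Total matrix square root: `PosSemidef.sqrt` on positive semidefinite matrices,
junk value `0` otherwise. -/
noncomputable def sqrtm {n : Type*} [Fintype n] [DecidableEq n] (M : Matrix n n ℂ) :
    Matrix n n ℂ :=
  if h : M.PosSemidef then
    (h.1.eigenvectorUnitary : Matrix n n ℂ) * diagonal ((↑) ∘ (√·) ∘ h.1.eigenvalues) *
      (star h.1.eigenvectorUnitary : Matrix n n ℂ)
  else 0

/-- The trace norm `‖X‖₁ = Tr √(X†X)`. -/
noncomputable def traceNorm {n : Type*} [Fintype n] [DecidableEq n] (X : Matrix n n ℂ) : ℝ :=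
  ((sqrtm (Xᴴ * X)).trace).re

/-- The swap operator `V = Σ_{i,j}|ij⟩⟨ji|` on `ℂ^d ⊗ ℂ^d`. -/
def swapOp (d : ℕ) : Matrix (Fin d × Fin d) (Fin d × Fin d) ℂ :=
  Matrix.of fun x y => if x.1 = y.2 ∧ x.2 = y.1 then 1 else 0

/-- Partial transpose over the factors `B` and `B'` of a matrix on
`(ℂ²_A ⊗ ℂ²_B) ⊗ (ℂ^{d}_{A'} ⊗ ℂ^{d}_{B'})`. -/
def ptransposeBBp {α β : Type*}
    (M : Matrix ((Fin 2 × Fin 2) × (α × β)) ((Fin 2 × Fin 2) × (α × β)) ℂ) :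
    Matrix ((Fin 2 × Fin 2) × (α × β)) ((Fin 2 × Fin 2) × (α × β)) ℂ :=
  Matrix.of fun x y =>
    M ((x.1.1, y.1.2), (x.2.1, y.2.2)) ((y.1.1, x.1.2), (y.2.1, x.2.2))

/-- The pbit `γ^V = (1/2)(|00⟩⟨00|⊗I/d² + |00⟩⟨11|⊗V/d² + |11⟩⟨00|⊗V/d² + |11⟩⟨11|⊗I/d²)`. -/
noncomputable def gammaV (d : ℕ) :
    Matrix ((Fin 2 × Fin 2) × (Fin d × Fin d)) ((Fin 2 × Fin 2) × (Fin d × Fin d)) ℂ :=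
  ((1 : ℂ) / 2) •
    (Matrix.single ((0 : Fin 2), (0 : Fin 2)) ((0 : Fin 2), (0 : Fin 2)) (1 : ℂ) ⊗ₖ
        (((d : ℂ) ^ 2)⁻¹ • (1 : Matrix (Fin d × Fin d) (Fin d × Fin d) ℂ)) +
      Matrix.single ((0 : Fin 2), (0 : Fin 2)) ((1 : Fin 2), (1 : Fin 2)) (1 : ℂ) ⊗ₖ
        (((d : ℂ) ^ 2)⁻¹ • swapOp d) +
      Matrix.single ((1 : Fin 2), (1 : Fin 2)) ((0 : Fin 2), (0 : Fin 2)) (1 : ℂ) ⊗ₖ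
        (((d : ℂ) ^ 2)⁻¹ • swapOp d) +
      Matrix.single ((1 : Fin 2), (1 : Fin 2)) ((1 : Fin 2), (1 : Fin 2)) (1 : ℂ) ⊗ₖ
        (((d : ℂ) ^ 2)⁻¹ • (1 : Matrix (Fin d × Fin d) (Fin d × Fin d) ℂ)))

namespace GammaAux

/-- The partially transposed swap: `W = Σ_{i,i'} |ii⟩⟨i'i'|`. -/
def W (d : ℕ) : Matrix (Fin d × Fin d) (Fin d × Fin d) ℂ :=
  Matrix.of fun x y => if x.1 = x.2 ∧ y.1 = y.2 then 1 else 0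

abbrev E (p q : Fin 2 × Fin 2) : Matrix (Fin 2 × Fin 2) (Fin 2 × Fin 2) ℂ :=
  Matrix.single p q 1

lemma Emul (p q r s : Fin 2 × Fin 2) :
    E p q * E r s = if q = r then E p s else 0 := by
  split_ifs with h
  · subst h
    simpa using Matrix.single_mul_single_same (α := ℂ) (c := 1) p q s 1
  · exact Matrix.single_mul_single_of_ne (α := ℂ) (c := 1) p q r h 1

lemma E_conjTranspose (p q : Fin 2 × Fin 2) : (E p q)ᴴ = E q p := by
  ext x y
  simp only [Matrix.conjTranspose_apply, E, Matrix.single, Matrix.of_apply]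
  split_ifs <;> simp_all [and_comm]

lemma W_mul_W (d : ℕ) : W d * W d = (d : ℂ) • W d := by
  ext x y
  simp only [Matrix.mul_apply, W, Matrix.of_apply, Matrix.smul_apply, smul_eq_mul]
  have h1 : ∀ z : Fin d × Fin d,
      (if x.1 = x.2 ∧ z.1 = z.2 then (1:ℂ) else 0) * (if z.1 = z.2 ∧ y.1 = y.2 then (1:ℂ) else 0)
      = (if x.1 = x.2 ∧ y.1 = y.2 then (1:ℂ) else 0) * (if z.1 = z.2 then 1 else 0) := by
    intro z; split_ifs <;> simp_all
  rw [Finset.sum_congr rfl fun z _ => h1 z, ← Finset.mul_sum]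
  have : (∑ z : Fin d × Fin d, if z.1 = z.2 then (1:ℂ) else 0) = (d : ℂ) := by
    rw [Fintype.sum_prod_type]
    simp [Finset.sum_ite_eq]
  rw [this]; ring

lemma W_conjTranspose (d : ℕ) : (W d)ᴴ = W d := by
  ext x y
  simp only [Matrix.conjTranspose_apply, W, Matrix.of_apply, and_comm]
  split_ifs <;> simp

lemma W_trace (d : ℕ) : (W d).trace = (d : ℂ) := by
  simp only [Matrix.trace, Matrix.diag, W, Matrix.of_apply, and_self]
  rw [Fintype.sum_prod_type]
  simp [Finset.sum_ite_eq]

lemma E_trace (p : Fin 2 × Fin 2) : (E p p).trace = (1:ℂ) := by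
  rw [Matrix.trace, Matrix.diag_single_same]
  simp

lemma W_posSemidef (d : ℕ) : (W d).PosSemidef := by
  refine .of_dotProduct_mulVec_nonneg (W_conjTranspose d) fun x => ?_
  set v : Fin d × Fin d → ℂ := fun z => if z.1 = z.2 then 1 else 0 with hv
  have hW : ∀ a b, W d a b = v a * v b := by
    intro a b; simp only [W, Matrix.of_apply, hv]; split_ifs <;> simp_all
  have : dotProduct (star x) (W d *ᵥ x) = star (∑ j, v j * x j) * (∑ j, v j * x j) := by
    simp only [dotProduct, Matrix.mulVec, dotProduct, Pi.star_apply, hW, star_sum, star_mul']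
    rw [Finset.sum_mul]
    refine Finset.sum_congr rfl fun i _ => ?_
    rw [Finset.mul_sum, Finset.mul_sum]
    refine Finset.sum_congr rfl fun j _ => ?_
    have : star (v i) = v i := by simp only [hv]; split_ifs <;> simp
    rw [this]; ring
  rw [this]
  exact star_mul_self_nonneg _

lemma conjTranspose_kron {l m n p : Type*} (A : Matrix l m ℂ) (B : Matrix n p ℂ) :
    (A ⊗ₖ B)ᴴ = Aᴴ ⊗ₖ Bᴴ := by
  ext x y
  simp [Matrix.conjTranspose_apply, Matrix.kroneckerMap_apply, star_mul', mul_comm]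

lemma posSemidef_kron {m n : Type*} [Fintype m] [DecidableEq m] [Fintype n] [DecidableEq n]
    {A : Matrix m m ℂ} {B : Matrix n n ℂ} (hA : A.PosSemidef) (hB : B.PosSemidef) :
    (A ⊗ₖ B).PosSemidef := by
  exact hA.kronecker hB

lemma E_posSemidef (p : Fin 2 × Fin 2) : (E p p).PosSemidef := by
  have h : E p p = Matrix.diagonal (Pi.single p (1:ℂ)) := by
    ext i j
    simp only [E, Matrix.single, Matrix.of_apply, Matrix.diagonal_apply, Pi.single_apply]
    split_ifs with h1 h2 h3 <;> try simp_all
    exact (h2 (h1.1.symm.trans h1.2)).elim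
  rw [h]
  refine Matrix.PosSemidef.diagonal fun i => ?_
  by_cases h : i = p <;> simp [Pi.single_apply, h]

lemma posSemidef_real_smul {n : Type*} [Fintype n] [DecidableEq n]
    {M : Matrix n n ℂ} (hM : M.PosSemidef) {r : ℝ} (hr : 0 ≤ r) :
    (((r : ℂ)) • M).PosSemidef := by
  refine .of_dotProduct_mulVec_nonneg ?_ ?_
  · show _ᴴ = _
    rw [Matrix.conjTranspose_smul, Complex.star_def, Complex.conj_ofReal, hM.1]
  · intro x
    rw [Matrix.smul_mulVec, dotProduct_smul, smul_eq_mul]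
    exact mul_nonneg (Complex.zero_le_real.mpr hr) (hM.dotProduct_mulVec_nonneg x)

lemma gammaV_apply (d : ℕ) (u v : (Fin 2 × Fin 2) × (Fin d × Fin d)) :
    gammaV d u v = (1:ℂ)/2 *
      ((if ((0:Fin 2),(0:Fin 2)) = u.1 ∧ ((0:Fin 2),(0:Fin 2)) = v.1 then 1 else 0) *
          (((d:ℂ)^2)⁻¹ * (if u.2 = v.2 then 1 else 0))
       + (if ((0:Fin 2),(0:Fin 2)) = u.1 ∧ ((1:Fin 2),(1:Fin 2)) = v.1 then 1 else 0) *
          (((d:ℂ)^2)⁻¹ * (if u.2.1 = v.2.2 ∧ u.2.2 = v.2.1 then 1 else 0))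
       + (if ((1:Fin 2),(1:Fin 2)) = u.1 ∧ ((0:Fin 2),(0:Fin 2)) = v.1 then 1 else 0) *
          (((d:ℂ)^2)⁻¹ * (if u.2.1 = v.2.2 ∧ u.2.2 = v.2.1 then 1 else 0))
       + (if ((1:Fin 2),(1:Fin 2)) = u.1 ∧ ((1:Fin 2),(1:Fin 2)) = v.1 then 1 else 0) *
          (((d:ℂ)^2)⁻¹ * (if u.2 = v.2 then 1 else 0))) := by
  obtain ⟨u1, u2⟩ := u
  obtain ⟨v1, v2⟩ := v
  simp only [gammaV, Matrix.smul_apply, Matrix.add_apply, Matrix.kroneckerMap_apply,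
    Matrix.single, Matrix.of_apply, Matrix.smul_apply, Matrix.one_apply, swapOp,
    smul_eq_mul]

/-- The `X = (γ^V)^Γ` in closed Kronecker form. -/
lemma X_repr (d : ℕ) :
    ptransposeBBp (gammaV d) =
      (((2 * (d:ℝ)^2)⁻¹ : ℝ) : ℂ) •
        (E (0,0) (0,0) ⊗ₖ (1 : Matrix (Fin d × Fin d) (Fin d × Fin d) ℂ) +
         E (0,1) (1,0) ⊗ₖ W d + E (1,0) (0,1) ⊗ₖ W d +
         E (1,1) (1,1) ⊗ₖ (1 : Matrix (Fin d × Fin d) (Fin d × Fin d) ℂ)) := by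
  have hc : (((2 * (d:ℝ)^2)⁻¹ : ℝ) : ℂ) = (1:ℂ)/2 * ((d:ℂ)^2)⁻¹ := by
    push_cast [mul_inv]
    ring
  ext ⟨⟨a, b⟩, ⟨i, j⟩⟩ ⟨⟨a', b'⟩, ⟨i', j'⟩⟩
  rw [hc]
  show gammaV d ((a, b'), (i, j')) ((a', b), (i', j)) = _
  rw [gammaV_apply]
  simp only [Matrix.smul_apply, Matrix.add_apply, Matrix.kroneckerMap_apply,
    Matrix.single, Matrix.of_apply, Matrix.one_apply, W, smul_eq_mul, E]
  fin_cases a <;> fin_cases b <;> fin_cases a' <;> fin_cases b' <;>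
    norm_num [Prod.ext_iff] <;> split_ifs <;> simp_all

/-- The positive square root of `Xᴴ X`. -/
noncomputable def S (d : ℕ) : Matrix ((Fin 2 × Fin 2) × (Fin d × Fin d))
    ((Fin 2 × Fin 2) × (Fin d × Fin d)) ℂ :=
  (((2 * (d:ℝ)^2)⁻¹ : ℝ) : ℂ) •
    (E (0,0) (0,0) ⊗ₖ (1 : Matrix (Fin d × Fin d) (Fin d × Fin d) ℂ) +
     E (0,1) (0,1) ⊗ₖ W d + E (1,0) (1,0) ⊗ₖ W d +
     E (1,1) (1,1) ⊗ₖ (1 : Matrix (Fin d × Fin d) (Fin d × Fin d) ℂ))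

lemma MM_eq_NN (d : ℕ) :
    (E (0,0) (0,0) ⊗ₖ (1 : Matrix (Fin d × Fin d) (Fin d × Fin d) ℂ) +
     E (0,1) (1,0) ⊗ₖ W d + E (1,0) (0,1) ⊗ₖ W d +
     E (1,1) (1,1) ⊗ₖ (1 : Matrix (Fin d × Fin d) (Fin d × Fin d) ℂ)) *
    (E (0,0) (0,0) ⊗ₖ (1 : Matrix (Fin d × Fin d) (Fin d × Fin d) ℂ) +
     E (0,1) (1,0) ⊗ₖ W d + E (1,0) (0,1) ⊗ₖ W d +
     E (1,1) (1,1) ⊗ₖ (1 : Matrix (Fin d × Fin d) (Fin d × Fin d) ℂ)) =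
    (E (0,0) (0,0) ⊗ₖ (1 : Matrix (Fin d × Fin d) (Fin d × Fin d) ℂ) +
     E (0,1) (0,1) ⊗ₖ W d + E (1,0) (1,0) ⊗ₖ W d +
     E (1,1) (1,1) ⊗ₖ (1 : Matrix (Fin d × Fin d) (Fin d × Fin d) ℂ)) *
    (E (0,0) (0,0) ⊗ₖ (1 : Matrix (Fin d × Fin d) (Fin d × Fin d) ℂ) +
     E (0,1) (0,1) ⊗ₖ W d + E (1,0) (1,0) ⊗ₖ W d +
     E (1,1) (1,1) ⊗ₖ (1 : Matrix (Fin d × Fin d) (Fin d × Fin d) ℂ)) := by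
  simp +decide only [add_mul, mul_add, ← Matrix.mul_kronecker_mul, Emul, W_mul_W,
    Matrix.one_mul, Matrix.mul_one, Matrix.zero_kronecker, if_true, if_false,
    add_zero, zero_add]
  abel

lemma Xh (d : ℕ) : (ptransposeBBp (gammaV d))ᴴ = ptransposeBBp (gammaV d) := by
  rw [X_repr]
  simp only [Matrix.conjTranspose_smul, Matrix.conjTranspose_add, conjTranspose_kron,
    E_conjTranspose, W_conjTranspose, Matrix.conjTranspose_one, Complex.star_def,
    Complex.conj_ofReal]
  abel

lemma key (d : ℕ) :
    (ptransposeBBp (gammaV d))ᴴ * ptransposeBBp (gammaV d) = S d ^ 2 := by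
  rw [Xh, X_repr, pow_two (S d), S, Matrix.smul_mul, Matrix.mul_smul, Matrix.smul_mul,
    Matrix.mul_smul, MM_eq_NN]

lemma S_posSemidef (d : ℕ) : (S d).PosSemidef := by
  refine posSemidef_real_smul ?_ (by positivity)
  exact (((posSemidef_kron (E_posSemidef _) Matrix.PosSemidef.one).add
    (posSemidef_kron (E_posSemidef _) (W_posSemidef d))).add
    (posSemidef_kron (E_posSemidef _) (W_posSemidef d))).add
    (posSemidef_kron (E_posSemidef _) Matrix.PosSemidef.one)

lemma S_trace (d : ℕ) (hd : 2 ≤ d) : (S d).trace = ((1 + 1/(d:ℝ) : ℝ) : ℂ) := by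
  have hdC : (d:ℂ) ≠ 0 := by
    exact_mod_cast Nat.cast_ne_zero.mpr (by omega)
  rw [S]
  rw [Matrix.trace_smul, Matrix.trace_add, Matrix.trace_add, Matrix.trace_add]
  simp only [Matrix.trace_kronecker, E_trace, W_trace, Matrix.trace_one]
  simp only [smul_eq_mul, Fintype.card_prod, Fintype.card_fin]
  push_cast [mul_inv]
  field_simp
  ring

open scoped MatrixOrder in
lemma sqrtm_eq {n : Type*} [Fintype n] [DecidableEq n] (M : Matrix n n ℂ) (h : M.PosSemidef) :
    sqrtm M = CFC.sqrt M := by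
  have h0 : 0 ≤ M := Matrix.nonneg_iff_posSemidef.mpr h
  rw [sqrtm, dif_pos h, CFC.sqrt_eq_cfc, cfc_nnreal_eq_real _ M, h.1.cfc_eq, IsHermitian.cfc,
    Unitary.conjStarAlgAut_apply]
  congr 2
  congr 1
  funext i
  simp [Real.coe_toNNReal', max_eq_left (h.eigenvalues_nonneg i)]

open scoped MatrixOrder in
lemma S_eq_sqrtm (d : ℕ)
    (hT : ((ptransposeBBp (gammaV d))ᴴ * ptransposeBBp (gammaV d)).PosSemidef) :
    S d = sqrtm ((ptransposeBBp (gammaV d))ᴴ * ptransposeBBp (gammaV d)) := by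
  have h0 : 0 ≤ S d := Matrix.nonneg_iff_posSemidef.mpr (S_posSemidef d)
  rw [sqrtm_eq _ hT, key, CFC.sqrt_sq (S d)]

end GammaAux

open GammaAux in
/-- for `d ≥ 2`, `‖(γ^V)^Γ‖₁ = 1 + 1/d`, i.e. the log-negativity of `γ^V`
is `log₂(1 + 1/d)`. -/
theorem logNegativity_gammaV (d : ℕ) (hd : 2 ≤ d) :
    traceNorm (ptransposeBBp (gammaV d)) = 1 + 1 / (d : ℝ) ∧
    Real.logb 2 (traceNorm (ptransposeBBp (gammaV d))) =
      Real.logb 2 (1 + 1 / (d : ℝ)) := by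
  have hT : ((ptransposeBBp (gammaV d))ᴴ * ptransposeBBp (gammaV d)).PosSemidef :=
    Matrix.posSemidef_conjTranspose_mul_self _
  have hsq : S d = sqrtm ((ptransposeBBp (gammaV d))ᴴ * ptransposeBBp (gammaV d)) :=
    S_eq_sqrtm d hT
  have h1 : traceNorm (ptransposeBBp (gammaV d)) = 1 + 1 / (d : ℝ) := by
    rw [traceNorm, ← hsq, S_trace d hd, Complex.ofReal_re]
  exact ⟨h1, by rw [h1]⟩
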